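/- arXiv:1601.07513 — 3 statements merged into one kernel-verified Lean document; each statement's English description precedes it below -/
import Mathlib

section
/- Let (X,Y) and (X',Y') be pairs of random variables on a common finite alphabet 𝒳 × 𝒴, and let γ = (1/2)‖P_{XY} − P_{X'Y'}‖₁. If γ ≤ 1 − 1/|𝒳 × 𝒴|, then |I(X;Y) − I(X';Y')| ≤ 3γ log(|𝒳 × 𝒴| − 1) + 3h(γ), where h is the binary entropy function. -/
open Finset

/-- A probability mass function on a finite type. -/
def IsPMF {α : Type*} [Fintype α] (p : α → ℝ) : Prop :=
  (∀ a, 0 ≤ p a) ∧ ∑ a, p a = 1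

/-- Shannon entropy (base 2) of a distribution on a finite type. -/
noncomputable def ent {α : Type*} [Fintype α] (p : α → ℝ) : ℝ :=
  - ∑ a, p a * Real.logb 2 (p a)

/-- Mutual information (base 2) of a joint distribution. -/
noncomputable def mi {α β : Type*} [Fintype α] [Fintype β] (p : α × β → ℝ) : ℝ :=
  ent (fun a => ∑ b, p (a, b)) + ent (fun b => ∑ a, p (a, b)) - ent p

/-- Conditional mutual information I(first ; second ∣ third) of a joint distribution. -/
noncomputable def cmi {α β γ : Type*} [Fintype α] [Fintype β] [Fintype γ]
    (p : α × β × γ → ℝ) : ℝ :=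
  ent (fun ac : α × γ => ∑ b, p (ac.1, b, ac.2))
    + ent (fun bc : β × γ => ∑ a, p (a, bc.1, bc.2))
    - ent p
    - ent (fun c => ∑ a, ∑ b, p (a, b, c))

/-- Binary entropy function (base 2). -/
noncomputable def hbin (x : ℝ) : ℝ :=
  - x * Real.logb 2 x - (1 - x) * Real.logb 2 (1 - x)

/-! Mutual information is `H(X) + H(Y) - H(X,Y)`, and marginalising does not increase total
variation, so it suffices to bound each of the three entropy differences by
`γ log (|𝒳 × 𝒴| - 1) + h(γ)`.

For distributions `p`, `q` sharing a common part `s ≤ p, q` of mass `1 - γ`, subadditivity of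
`η x = -x log x` gives `H(p) ≤ H(s) + H(p - s)`, the excess `p - s` has mass `γ` and so
`H(p - s) ≤ γ log m + η(γ)` if it lives on `m` points, and concavity of `η` gives
`H(q) ≥ H(s) - η(1 - γ)`. For the joint law take `s = min p q`: then `p - s` misses a point
where `q > p`, so `m = |𝒳 × 𝒴| - 1`. For a marginal, whose distance may be smaller than `γ`,
scale `min p q` down to mass `1 - γ` and use `m = |𝒳| ≤ |𝒳 × 𝒴| - 1`; this needs `|𝒴| ≥ 2`,
and when a factor is a single point `I = 0`. -/

open Real

section NegMulLog

variable {ι : Type*}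

lemma negMulLog_add_le {x y : ℝ} (hx : 0 ≤ x) (hy : 0 ≤ y) :
    negMulLog (x + y) ≤ negMulLog x + negMulLog y := by
  have hlog {a b : ℝ} (ha : 0 ≤ a) (hb : 0 ≤ b) : a * log a ≤ a * log (a + b) := by
    rcases ha.eq_or_lt with rfl | ha
    · simp
    · gcongr; linarith
  have hx' := hlog hx hy
  have hy' : y * log y ≤ y * log (x + y) := add_comm y x ▸ hlog hy hx
  simp only [negMulLog, neg_mul, add_mul]
  linarith

lemma mul_negMulLog_le_negMulLog_add {θ x y : ℝ} (hθ0 : 0 ≤ θ) (hθ1 : θ ≤ 1) (hx : 0 ≤ x)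
    (hy0 : 0 ≤ y) (hy1 : y ≤ 1) :
    θ * negMulLog x ≤ negMulLog (θ * x + (1 - θ) * y) := by
  have hconc := concaveOn_negMulLog.2 (Set.mem_Ici.2 hx) (Set.mem_Ici.2 hy0) hθ0 (sub_nonneg.2 hθ1)
    (add_sub_cancel θ 1)
  simp only [smul_eq_mul] at hconc
  linarith [mul_nonneg (sub_nonneg.2 hθ1) (negMulLog_nonneg hy0 hy1)]

lemma sum_negMulLog_le_log_card {t : Finset ι} {u : ι → ℝ} (hu0 : ∀ i ∈ t, 0 ≤ u i)
    (hu1 : ∑ i ∈ t, u i = 1) :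
    ∑ i ∈ t, negMulLog (u i) ≤ log #t := by
  have hcard : (0 : ℝ) < #t := by
    exact_mod_cast card_pos.2 (nonempty_of_sum_ne_zero (hu1.symm ▸ one_ne_zero))
  have jensen := concaveOn_negMulLog.le_map_sum (t := t) (w := fun _ => (#t : ℝ)⁻¹) (p := u)
    (fun _ _ => by positivity) (by simp [hcard.ne']) (fun i hi => hu0 i hi)
  simp only [smul_eq_mul, ← mul_sum, hu1, mul_one] at jensen
  rw [negMulLog, log_inv, neg_mul_neg] at jensen
  exact le_of_mul_le_mul_left jensen (inv_pos.2 hcard)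

lemma sum_negMulLog_eq_mul_sum_negMulLog_div_add {t : Finset ι} {r : ι → ℝ} {c : ℝ} (hc : c ≠ 0)
    (hr : ∑ i ∈ t, r i = c) :
    ∑ i ∈ t, negMulLog (r i) = c * ∑ i ∈ t, negMulLog (r i / c) + negMulLog c := by
  have h i : negMulLog (r i) = c * negMulLog (r i / c) + r i / c * negMulLog c := by
    rw [← negMulLog_mul, div_mul_cancel₀ _ hc]
  rw [sum_congr rfl fun i _ => h i, sum_add_distrib, ← mul_sum, ← sum_mul, ← sum_div, hr,
    div_self hc, one_mul]

end NegMulLog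

section Entropy

variable {α : Type*} [Fintype α]

theorem sum_negMulLog_sub_sum_negMulLog_le {p q s : α → ℝ} {γ : ℝ} {t : Finset α}
    (hp : ∑ i, p i = 1) (hq : ∑ i, q i = 1) (hs0 : ∀ i, 0 ≤ s i) (hsp : ∀ i, s i ≤ p i)
    (hsq : ∀ i, s i ≤ q i) (hs : ∑ i, s i = 1 - γ) (hγ0 : 0 < γ) (hγ1 : γ < 1)
    (ht : ∀ i ∉ t, p i = s i) :
    ∑ i, negMulLog (p i) - ∑ i, negMulLog (q i) ≤ γ * log #t + binEntropy γ := by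
  have hps : ∑ i, (p i - s i) = γ := by rw [sum_sub_distrib, hp, hs]; ring
  have hqs : ∑ i, (q i - s i) = γ := by rw [sum_sub_distrib, hq, hs]; ring
  have hsplit : ∑ i, negMulLog (p i) ≤ ∑ i, negMulLog (s i) + ∑ i, negMulLog (p i - s i) := by
    rw [← sum_add_distrib]
    gcongr with i
    simpa using negMulLog_add_le (hs0 i) (sub_nonneg.2 (hsp i))
  have hexcess : ∑ i, negMulLog (p i - s i) ≤ γ * log #t + negMulLog γ := by
    have hsupp : ∀ i ∈ univ, i ∉ t → (p i - s i) / γ = 0 := fun i _ hi => by simp [ht i hi]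
    rw [sum_negMulLog_eq_mul_sum_negMulLog_div_add hγ0.ne' hps,
      ← sum_subset (subset_univ t) fun i hu hi => by simp [hsupp i hu hi]]
    gcongr
    refine sum_negMulLog_le_log_card (fun i _ => div_nonneg (sub_nonneg.2 (hsp i)) hγ0.le) ?_
    rw [sum_subset (subset_univ t) hsupp, ← sum_div, hps, div_self hγ0.ne']
  -- concavity, with `q i` the mixture `(1 - γ) * (s i / (1 - γ)) + γ * ((q i - s i) / γ)`
  have hcommon : ∑ i, negMulLog (s i) ≤ ∑ i, negMulLog (q i) + negMulLog (1 - γ) := by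
    rw [sum_negMulLog_eq_mul_sum_negMulLog_div_add (sub_pos.2 hγ1).ne' hs, mul_sum]
    gcongr with i
    have hw1 : q i - s i ≤ γ :=
      hqs ▸ single_le_sum (fun j _ => sub_nonneg.2 (hsq j)) (mem_univ i)
    refine (mul_negMulLog_le_negMulLog_add (sub_nonneg.2 hγ1.le) (sub_le_self 1 hγ0.le)
      (div_nonneg (hs0 i) (sub_pos.2 hγ1).le) (div_nonneg (sub_nonneg.2 (hsq i)) hγ0.le)
      ((div_le_one hγ0).2 hw1)).trans_eq (congrArg negMulLog ?_)
    rw [sub_sub_cancel, mul_div_cancel₀ _ (sub_pos.2 hγ1).ne', mul_div_cancel₀ _ hγ0.ne']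
    ring
  rw [binEntropy_eq_negMulLog_add_negMulLog_one_sub]
  linarith

lemma ent_eq_sum_negMulLog_div (p : α → ℝ) : ent p = (∑ a, negMulLog (p a)) / log 2 := by
  simp only [ent, negMulLog, logb, sum_div, ← sum_neg_distrib]
  exact sum_congr rfl fun a _ => by ring

lemma hbin_eq_binEntropy_div (x : ℝ) : hbin x = binEntropy x / log 2 := by
  rw [hbin, binEntropy_eq_negMulLog_add_negMulLog_one_sub, negMulLog, negMulLog, logb, logb]
  ring

lemma hbin_nonneg {x : ℝ} (h0 : 0 ≤ x) (h1 : x ≤ 1) : 0 ≤ hbin x := by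
  rw [hbin_eq_binEntropy_div]
  exact div_nonneg (binEntropy_nonneg h0 h1) (log_nonneg one_le_two)

theorem ent_sub_ent_le {p q s : α → ℝ} {γ : ℝ} {t : Finset α}
    (hp : ∑ i, p i = 1) (hq : ∑ i, q i = 1) (hs0 : ∀ i, 0 ≤ s i) (hsp : ∀ i, s i ≤ p i)
    (hsq : ∀ i, s i ≤ q i) (hs : ∑ i, s i = 1 - γ) (hγ0 : 0 < γ) (hγ1 : γ < 1)
    (ht : ∀ i ∉ t, p i = s i) :
    ent p - ent q ≤ γ * logb 2 #t + hbin γ := by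
  rw [ent_eq_sum_negMulLog_div, ent_eq_sum_negMulLog_div, hbin_eq_binEntropy_div, logb,
    ← sub_div, ← mul_div_assoc, ← add_div]
  gcongr
  exact sum_negMulLog_sub_sum_negMulLog_le hp hq hs0 hsp hsq hs hγ0 hγ1 ht

end Entropy

section TotalVariation

variable {α : Type*} [Fintype α]

lemma sum_abs_sub_eq_two_sub_two_mul_sum_min {p q : α → ℝ} (hp : ∑ i, p i = 1)
    (hq : ∑ i, q i = 1) : ∑ i, |p i - q i| = 2 - 2 * ∑ i, min (p i) (q i) := by
  have h i : |p i - q i| = p i + q i - 2 * min (p i) (q i) := by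
    linarith [max_sub_min_eq_abs' (p i) (q i), min_add_max (p i) (q i)]
  simp only [h, sum_sub_distrib, sum_add_distrib, hp, hq, ← mul_sum]
  ring

theorem ent_sub_ent_le_of_sum_abs_sub_eq {p q : α → ℝ} {γ : ℝ} (hp : IsPMF p) (hq : IsPMF q)
    (htv : ∑ i, |p i - q i| = 2 * γ) (hγ0 : 0 < γ) (hγ1 : γ < 1) :
    ent p - ent q ≤ γ * logb 2 (Fintype.card α - 1) + hbin γ := by
  classical
  have hs : ∑ i, min (p i) (q i) = 1 - γ := by
    linarith [sum_abs_sub_eq_two_sub_two_mul_sum_min hp.2 hq.2]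
  -- `p - min p q` vanishes at a point where `q > p`, which accounts for the `- 1`
  obtain ⟨j, -, hj⟩ := exists_lt_of_sum_lt (s := univ) (f := fun i => min (p i) (q i)) (g := q)
    (by rw [hs, hq.2]; linarith)
  have hpj : p j < q j := by simpa [lt_irrefl] using hj
  have hcard : (#(univ.erase j) : ℝ) = Fintype.card α - 1 := by
    rw [card_erase_of_mem (mem_univ j), card_univ, Nat.cast_pred (Fintype.card_pos_iff.2 ⟨j⟩)]
  rw [← hcard]
  refine ent_sub_ent_le hp.2 hq.2 (fun i => le_min (hp.1 i) (hq.1 i)) (fun i => min_le_left _ _)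
    (fun i => min_le_right _ _) hs hγ0 hγ1 fun i hi => ?_
  obtain rfl : i = j := by simpa using hi
  exact (min_eq_left hpj.le).symm

theorem abs_ent_sub_ent_le_of_sum_abs_sub_eq {p q : α → ℝ} {γ : ℝ} (hp : IsPMF p)
    (hq : IsPMF q) (htv : ∑ i, |p i - q i| = 2 * γ) (hγ0 : 0 < γ) (hγ1 : γ < 1) :
    |ent p - ent q| ≤ γ * logb 2 (Fintype.card α - 1) + hbin γ :=
  abs_sub_le_iff.2 ⟨ent_sub_ent_le_of_sum_abs_sub_eq hp hq htv hγ0 hγ1,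
    ent_sub_ent_le_of_sum_abs_sub_eq hq hp (by simpa only [abs_sub_comm] using htv) hγ0 hγ1⟩

theorem ent_sub_ent_le_of_sum_abs_sub_le {p q : α → ℝ} {γ m : ℝ} (hp : IsPMF p) (hq : IsPMF q)
    (htv : ∑ i, |p i - q i| ≤ 2 * γ) (hγ0 : 0 < γ) (hγ1 : γ < 1) (hm : Fintype.card α ≤ m) :
    ent p - ent q ≤ γ * logb 2 m + hbin γ := by
  set M := ∑ i, min (p i) (q i)
  have hM : 1 - γ ≤ M := by linarith [sum_abs_sub_eq_two_sub_two_mul_sum_min hp.2 hq.2]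
  have hMpos : 0 < M := by linarith
  set c := (1 - γ) / M
  have hc0 : 0 ≤ c := div_nonneg (by linarith) hMpos.le
  have hc1 : c ≤ 1 := (div_le_one hMpos).2 hM
  have hmin i : 0 ≤ min (p i) (q i) := le_min (hp.1 i) (hq.1 i)
  have hle := ent_sub_ent_le (t := univ) (s := fun i => c * min (p i) (q i)) hp.2 hq.2
    (fun i => mul_nonneg hc0 (hmin i))
    (fun i => (mul_le_of_le_one_left (hmin i) hc1).trans (min_le_left _ _))
    (fun i => (mul_le_of_le_one_left (hmin i) hc1).trans (min_le_right _ _))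
    (by rw [← mul_sum, div_mul_cancel₀ _ hMpos.ne']) hγ0 hγ1 (by simp)
  have hcard : (0 : ℝ) < #(univ : Finset α) :=
    Nat.cast_pos.2 (card_pos.2 (nonempty_of_sum_ne_zero (hp.2.symm ▸ one_ne_zero)))
  have hlog := logb_le_logb_of_le one_lt_two hcard (card_univ (α := α) ▸ hm)
  linarith [mul_le_mul_of_nonneg_left hlog hγ0.le]

theorem abs_ent_sub_ent_le_of_sum_abs_sub_le {p q : α → ℝ} {γ m : ℝ} (hp : IsPMF p)
    (hq : IsPMF q) (htv : ∑ i, |p i - q i| ≤ 2 * γ) (hγ0 : 0 < γ) (hγ1 : γ < 1)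
    (hm : Fintype.card α ≤ m) :
    |ent p - ent q| ≤ γ * logb 2 m + hbin γ :=
  abs_sub_le_iff.2 ⟨ent_sub_ent_le_of_sum_abs_sub_le hp hq htv hγ0 hγ1 hm,
    ent_sub_ent_le_of_sum_abs_sub_le hq hp (by simpa only [abs_sub_comm] using htv) hγ0 hγ1 hm⟩

end TotalVariation

section Marginals

variable {α β : Type*} [Fintype α] [Fintype β]

lemma IsPMF.fst {p : α × β → ℝ} (hp : IsPMF p) : IsPMF fun a => ∑ b, p (a, b) :=
  ⟨fun _ => sum_nonneg fun _ _ => hp.1 _, by rw [← Fintype.sum_prod_type']; exact hp.2⟩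

lemma IsPMF.snd {p : α × β → ℝ} (hp : IsPMF p) : IsPMF fun b => ∑ a, p (a, b) :=
  ⟨fun _ => sum_nonneg fun _ _ => hp.1 _, by rw [sum_comm, ← Fintype.sum_prod_type']; exact hp.2⟩

lemma sum_abs_fst_sub_le (p q : α × β → ℝ) :
    ∑ a, |∑ b, p (a, b) - ∑ b, q (a, b)| ≤ ∑ x, |p x - q x| := by
  rw [Fintype.sum_prod_type]
  gcongr with a
  rw [← sum_sub_distrib]
  exact abs_sum_le_sum_abs _ _

lemma sum_abs_snd_sub_le (p q : α × β → ℝ) :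
    ∑ b, |∑ a, p (a, b) - ∑ a, q (a, b)| ≤ ∑ x, |p x - q x| := by
  rw [Fintype.sum_prod_type_right]
  gcongr with b
  rw [← sum_sub_distrib]
  exact abs_sum_le_sum_abs _ _

theorem abs_ent_fst_sub_le [Nonempty α] [Nontrivial β] {p q : α × β → ℝ} {γ : ℝ} (hp : IsPMF p)
    (hq : IsPMF q) (htv : ∑ x, |p x - q x| = 2 * γ) (hγ0 : 0 < γ) (hγ1 : γ < 1) :
    |ent (fun a => ∑ b, p (a, b)) - ent (fun a => ∑ b, q (a, b))| ≤
      γ * logb 2 (Fintype.card (α × β) - 1) + hbin γ := by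
  refine abs_ent_sub_ent_le_of_sum_abs_sub_le hp.fst hq.fst (htv ▸ sum_abs_fst_sub_le p q) hγ0 hγ1 ?_
  have : Fintype.card α + 1 ≤ Fintype.card (α × β) := by
    rw [Fintype.card_prod]
    nlinarith [Fintype.card_pos (α := α), Fintype.one_lt_card (α := β)]
  rw [le_sub_iff_add_le]
  exact_mod_cast this

theorem abs_ent_snd_sub_le [Nontrivial α] [Nonempty β] {p q : α × β → ℝ} {γ : ℝ} (hp : IsPMF p)
    (hq : IsPMF q) (htv : ∑ x, |p x - q x| = 2 * γ) (hγ0 : 0 < γ) (hγ1 : γ < 1) :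
    |ent (fun b => ∑ a, p (a, b)) - ent (fun b => ∑ a, q (a, b))| ≤
      γ * logb 2 (Fintype.card (α × β) - 1) + hbin γ := by
  refine abs_ent_sub_ent_le_of_sum_abs_sub_le hp.snd hq.snd (htv ▸ sum_abs_snd_sub_le p q) hγ0 hγ1 ?_
  have : Fintype.card β + 1 ≤ Fintype.card (α × β) := by
    rw [Fintype.card_prod]
    nlinarith [Fintype.card_pos (α := β), Fintype.one_lt_card (α := α)]
  rw [le_sub_iff_add_le]
  exact_mod_cast this

end Marginals

section MutualInformation

variable {α β : Type*} [Fintype α] [Fintype β]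

lemma abs_mi_sub_mi_le (p q : α × β → ℝ) :
    |mi p - mi q| ≤ |ent (fun a => ∑ b, p (a, b)) - ent (fun a => ∑ b, q (a, b))|
      + |ent (fun b => ∑ a, p (a, b)) - ent (fun b => ∑ a, q (a, b))| + |ent p - ent q| := by
  calc |mi p - mi q|
      = |(ent (fun a => ∑ b, p (a, b)) - ent (fun a => ∑ b, q (a, b)))
          + (ent (fun b => ∑ a, p (a, b)) - ent (fun b => ∑ a, q (a, b)))
          + -(ent p - ent q)| := by rw [mi, mi]; congr 1; ring
    _ ≤ _ := (abs_add_three _ _ _).trans_eq (by rw [abs_neg])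

lemma mi_comp_swap (p : α × β → ℝ) : mi (p ∘ Prod.swap) = mi p := by
  have h : ent (p ∘ Prod.swap) = ent p :=
    congrArg Neg.neg ((Equiv.prodComm β α).sum_comp fun x => p x * logb 2 (p x))
  simp only [mi, h, Function.comp_apply, Prod.swap_prod_mk]
  ring

lemma mi_eq_zero_of_subsingleton_right [Subsingleton β] [Nonempty β] {p : α × β → ℝ}
    (hp : ∑ x, p x = 1) : mi p = 0 := by
  obtain ⟨b₀⟩ := ‹Nonempty β›
  have hsum (f : α × β → ℝ) : ∑ x, f x = ∑ a, f (a, b₀) := by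
    rw [Fintype.sum_prod_type]
    exact sum_congr rfl fun a _ => Fintype.sum_subsingleton _ b₀
  have hX : (fun a => ∑ b, p (a, b)) = fun a => p (a, b₀) :=
    funext fun a => Fintype.sum_subsingleton _ b₀
  have hY : (fun b => ∑ a, p (a, b)) = fun _ => 1 :=
    funext fun b => by rw [Subsingleton.elim b b₀, ← hsum, hp]
  rw [mi, hX, hY]
  simp [ent, hsum fun x => p x * logb 2 (p x)]

lemma mi_eq_zero_of_subsingleton_left [Subsingleton α] [Nonempty α] {p : α × β → ℝ}
    (hp : ∑ x, p x = 1) : mi p = 0 := by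
  rw [← mi_comp_swap]
  exact mi_eq_zero_of_subsingleton_right ((Equiv.prodComm β α).sum_comp p ▸ hp)

end MutualInformation

/-- Continuity of mutual information in total variation distance. -/
theorem mi_continuity {𝒳 𝒴 : Type*} [Fintype 𝒳] [Fintype 𝒴] [Nonempty 𝒳] [Nonempty 𝒴]
    (p q : 𝒳 × 𝒴 → ℝ) (hp : IsPMF p) (hq : IsPMF q)
    (γ : ℝ) (hγ : γ = (1/2) * ∑ xy, |p xy - q xy|)
    (hbound : γ ≤ 1 - 1 / (Fintype.card (𝒳 × 𝒴) : ℝ)) :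
    |mi p - mi q| ≤
      3 * γ * Real.logb 2 ((Fintype.card (𝒳 × 𝒴) : ℝ) - 1) + 3 * hbin γ := by
  have htv : ∑ xy, |p xy - q xy| = 2 * γ := by rw [hγ]; ring
  have hd : (0 : ℝ) < Fintype.card (𝒳 × 𝒴) := Nat.cast_pos.2 Fintype.card_pos
  have hγ1 : γ < 1 := hbound.trans_lt (sub_lt_self 1 (by positivity))
  obtain rfl | hγ0 := (show 0 ≤ γ by rw [hγ]; positivity).eq_or_lt
  · have hpq : p = q := funext fun xy => sub_eq_zero.1 <| abs_eq_zero.1 <|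
      (sum_eq_zero_iff_of_nonneg fun _ _ => abs_nonneg _).1 (by simpa using htv) xy (mem_univ xy)
    simp [hpq, hbin]
  have hcard : 1 < Fintype.card (𝒳 × 𝒴) := (Nat.one_lt_cast (α := ℝ)).1 <| by
    by_contra! h
    linarith [one_le_one_div hd h]
  have hlog : 0 ≤ logb 2 ((Fintype.card (𝒳 × 𝒴) : ℝ) - 1) :=
    logb_nonneg one_lt_two (le_sub_iff_add_le.2 (by exact_mod_cast hcard))
  have hrhs : 0 ≤ γ * logb 2 ((Fintype.card (𝒳 × 𝒴) : ℝ) - 1) + hbin γ :=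
    add_nonneg (mul_nonneg hγ0.le hlog) (hbin_nonneg hγ0.le hγ1.le)
  rcases subsingleton_or_nontrivial 𝒳 with h𝒳 | h𝒳
  · rw [mi_eq_zero_of_subsingleton_left hp.2, mi_eq_zero_of_subsingleton_left hq.2, sub_self,
      abs_zero]
    linarith
  rcases subsingleton_or_nontrivial 𝒴 with h𝒴 | h𝒴
  · rw [mi_eq_zero_of_subsingleton_right hp.2, mi_eq_zero_of_subsingleton_right hq.2, sub_self,
      abs_zero]
    linarith
  linarith [abs_mi_sub_mi_le p q, abs_ent_fst_sub_le hp hq htv hγ0 hγ1,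
    abs_ent_snd_sub_le hp hq htv hγ0 hγ1, abs_ent_sub_ent_le_of_sum_abs_sub_eq hp hq htv hγ0 hγ1]
end

section
/- Let 𝒳 and 𝒰 be finite sets, S an arbitrary (possibly infinite) index set, and {W_s : 𝒳 → P(𝒰)}_{s∈S} a family of stochastic matrices (channels). For every natural number l with l ≥ 2|𝒰|², there exists a finite family of stochastic matrices {W_{s'} : 𝒳 → P(𝒰)}_{s'∈S'} with |S'| ≤ (l+1)^{|𝒳×𝒰|} such that for every s ∈ S there exists s' ∈ S' with: (i) |W_s(u|x) − W_{s'}(u|x)| ≤ |𝒰|/l for all x, u, and (ii) W_s(u|x) ≤ e^{2|𝒰|²/l} W_{s'}(u|x) for all x, u. -/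
/-!
Quantize each row `p = W s x` on the grid of mesh `1 / l`, `m u = ⌊l p u⌋₊ ∈ {0, …, l}`, and
replace it by its add-one (Laplace) smoothing `q u = (m u + 1) / ∑ v, (m v + 1)`; there are at
most `(l + 1) ^ |𝒳 × 𝒰|` such channels. The denominator lies in `[l, l + |𝒰|]`, so `p u` and
`q u` both lie in `[(m u + 1) / l - |𝒰| / l, (m u + 1) / l]`, and
`p u ≤ (m u + 1) / l ≤ (1 + |𝒰| / l) q u ≤ exp (|𝒰| / l) q u`.
-/

open Finset

theorem exists_finset_card_le_coe_eq_range {S α β : Type*} [Finite β] {f : S → α}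
    {g : β → α} (h : Set.range f ⊆ Set.range g) :
    ∃ T : Finset α, T.card ≤ Nat.card β ∧ (T : Set α) = Set.range f := by
  have hfin := (Set.finite_range g).subset h
  refine ⟨hfin.toFinset, ?_, hfin.coe_toFinset⟩
  calc hfin.toFinset.card = (Set.range f).ncard := (Set.ncard_eq_toFinset_card _ hfin).symm
    _ ≤ (Set.range g).ncard := Set.ncard_le_ncard h (Set.finite_range g)
    _ ≤ Nat.card β := Finite.card_range_le g

section LaplaceSmoothing

variable {ι : Type*} [Fintype ι]

noncomputable def laplaceSmoothing (m : ι → ℕ) (u : ι) : ℝ :=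
  (m u + 1) / ∑ v, ((m v : ℝ) + 1)

theorem laplaceSmoothing_mem_stdSimplex [Nonempty ι] (m : ι → ℕ) :
    laplaceSmoothing m ∈ stdSimplex ℝ ι := by
  have hD : 0 < ∑ v, ((m v : ℝ) + 1) := sum_pos (fun v _ => by positivity) univ_nonempty
  exact ⟨fun u => by unfold laplaceSmoothing; positivity, by
    simp only [laplaceSmoothing, ← sum_div, div_self hD.ne']⟩

end LaplaceSmoothing

section Quantize

variable {ι : Type*} [Fintype ι] {p : ι → ℝ} {l : ℕ}

noncomputable def quantize (l : ℕ) (p : ι → ℝ) : ι → ℝ :=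
  laplaceSmoothing fun u => ⌊l * p u⌋₊

theorem floor_mul_le_of_mem_stdSimplex (hp : p ∈ stdSimplex ℝ ι) (u : ι) :
    ⌊l * p u⌋₊ ≤ l := by
  have h := mul_le_of_le_one_right (Nat.cast_nonneg (α := ℝ) l) (mem_Icc_of_mem_stdSimplex hp u).2
  simpa using Nat.floor_le_floor h

theorem exists_quantize_eq_laplaceSmoothing (hp : p ∈ stdSimplex ℝ ι) :
    ∃ b : ι → Fin (l + 1), quantize l p = laplaceSmoothing fun u => b u :=
  ⟨fun u => ⟨_, Nat.lt_succ_of_le (floor_mul_le_of_mem_stdSimplex hp u)⟩, rfl⟩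

theorem quantize_mem_stdSimplex (hp : p ∈ stdSimplex ℝ ι) : quantize l p ∈ stdSimplex ℝ ι := by
  have : Nonempty ι := by
    by_contra h
    rw [not_nonempty_iff] at h
    simpa using hp.2
  exact laplaceSmoothing_mem_stdSimplex _

theorem le_sum_floor_mul_add_one (hp : p ∈ stdSimplex ℝ ι) :
    (l : ℝ) ≤ ∑ u, ((⌊l * p u⌋₊ : ℝ) + 1) :=
  calc (l : ℝ) = ∑ u, l * p u := by rw [← mul_sum, hp.2, mul_one]
    _ ≤ _ := sum_le_sum fun u _ => (Nat.lt_floor_add_one _).le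

theorem sum_floor_mul_add_one_le (hp : p ∈ stdSimplex ℝ ι) :
    ∑ u, ((⌊l * p u⌋₊ : ℝ) + 1) ≤ l + Fintype.card ι :=
  calc ∑ u, ((⌊l * p u⌋₊ : ℝ) + 1) ≤ ∑ u, (l * p u + 1) :=
        sum_le_sum fun u _ => by gcongr; exact Nat.floor_le (mul_nonneg l.cast_nonneg (hp.1 u))
    _ = l + Fintype.card ι := by simp [sum_add_distrib, ← mul_sum, hp.2]

theorem quantize_le_div (hp : p ∈ stdSimplex ℝ ι) (hl : 0 < l) (u : ι) :
    quantize l p u ≤ (⌊l * p u⌋₊ + 1) / l :=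
  div_le_div_of_nonneg_left (by positivity) (by exact_mod_cast hl) (le_sum_floor_mul_add_one hp)

theorem div_le_quantize (hp : p ∈ stdSimplex ℝ ι) (u : ι) :
    (⌊l * p u⌋₊ + 1) / (l + Fintype.card ι) ≤ quantize l p u :=
  div_le_div_of_nonneg_left (by positivity) (sum_pos (fun v _ => by positivity) ⟨u, mem_univ u⟩)
    (sum_floor_mul_add_one_le hp)

theorem abs_sub_quantize_le (hp : p ∈ stdSimplex ℝ ι) (hl : 0 < l) (u : ι) :
    |p u - quantize l p u| ≤ Fintype.card ι / l := by
  have hl' : (0 : ℝ) < l := by exact_mod_cast hl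
  have hk : (1 : ℝ) ≤ Fintype.card ι := by exact_mod_cast Fintype.card_pos_iff.mpr ⟨u⟩
  set a : ℝ := ⌊l * p u⌋₊ + 1
  have hp_lt : p u < a / l := by
    rw [lt_div_iff₀' hl']; exact Nat.lt_floor_add_one _
  have hp_ge : a / l - 1 / l ≤ p u := by
    rw [← sub_div, div_le_iff₀' hl', add_sub_cancel_right]
    exact Nat.floor_le (mul_nonneg hl'.le (hp.1 u))
  have ha : a ≤ l + Fintype.card ι := by
    have := floor_mul_le_of_mem_stdSimplex (l := l) hp u
    simp only [a]; gcongr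
  have hgap : a / l - a / (l + Fintype.card ι) ≤ Fintype.card ι / l := by
    rw [div_sub_div _ _ hl'.ne' (by positivity), div_le_div_iff₀ (by positivity) hl']
    nlinarith [mul_le_mul_of_nonneg_right ha (by positivity : (0 : ℝ) ≤ Fintype.card ι * l)]
  have h1 : 1 / (l : ℝ) ≤ Fintype.card ι / l := by gcongr
  have hq_le := quantize_le_div hp hl u
  have hq_ge := div_le_quantize (l := l) hp u
  rw [abs_sub_le_iff]
  constructor <;> linarith

theorem le_one_add_div_mul_quantize (hp : p ∈ stdSimplex ℝ ι) (hl : 0 < l) (u : ι) :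
    p u ≤ (1 + Fintype.card ι / l) * quantize l p u := by
  have hl' : (0 : ℝ) < l := by exact_mod_cast hl
  calc p u ≤ (⌊l * p u⌋₊ + 1) / l := by
        rw [le_div_iff₀' hl']; exact (Nat.lt_floor_add_one _).le
    _ = (1 + Fintype.card ι / l) * ((⌊l * p u⌋₊ + 1) / (l + Fintype.card ι)) := by
        field_simp
    _ ≤ _ := by gcongr; exact div_le_quantize hp u

end Quantize

theorem one_add_div_le_exp_two_mul_sq_div (k l : ℕ) :
    1 + (k : ℝ) / l ≤ Real.exp (2 * (k : ℝ) ^ 2 / l) :=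
  calc 1 + (k : ℝ) / l ≤ Real.exp (k / l) := by linarith [Real.add_one_le_exp ((k : ℝ) / l)]
    _ ≤ _ := by
      gcongr
      rcases k with _ | k
      · simp
      · push_cast; nlinarith

/-- Finite approximation of an arbitrary family of channels. -/
theorem channel_approximation {𝒳 𝒰 : Type*} [Fintype 𝒳] [Fintype 𝒰] {S : Type*}
    (W : S → 𝒳 → 𝒰 → ℝ)
    (hW : ∀ s x, (∀ u, 0 ≤ W s x u) ∧ ∑ u, W s x u = 1)
    (l : ℕ) (hl : 2 * (Fintype.card 𝒰) ^ 2 ≤ l) :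
    ∃ S' : Finset (𝒳 → 𝒰 → ℝ),
      S'.card ≤ (l + 1) ^ (Fintype.card 𝒳 * Fintype.card 𝒰) ∧
      (∀ W' ∈ S', ∀ x, (∀ u, 0 ≤ W' x u) ∧ ∑ u, W' x u = 1) ∧
      ∀ s : S, ∃ W' ∈ S',
        (∀ x u, |W s x u - W' x u| ≤ (Fintype.card 𝒰 : ℝ) / l) ∧
        (∀ x u, W s x u ≤ Real.exp (2 * (Fintype.card 𝒰 : ℝ) ^ 2 / l) * W' x u) := by
  have hrange : Set.range (fun s x => quantize l (W s x)) ⊆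
      Set.range fun (b : 𝒳 → 𝒰 → Fin (l + 1)) x => laplaceSmoothing fun u => b x u := by
    rintro _ ⟨s, rfl⟩
    choose b hb using fun x => exists_quantize_eq_laplaceSmoothing (l := l) (hW s x)
    exact ⟨b, funext fun x => (hb x).symm⟩
  obtain ⟨S', hcard, hS'⟩ := exists_finset_card_le_coe_eq_range hrange
  have hl_pos (u : 𝒰) : 0 < l := by
    have := Fintype.card_pos_iff.mpr ⟨u⟩
    nlinarith
  have hmem (W' : 𝒳 → 𝒰 → ℝ) : W' ∈ S' ↔ W' ∈ Set.range _ := Set.ext_iff.mp hS' W'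
  refine ⟨S', hcard.trans_eq ?_, ?_, fun s => ⟨_, (hmem _).mpr (Set.mem_range_self s), ?_, ?_⟩⟩
  · simp [Nat.card_fun, ← pow_mul, mul_comm]
  · intro W' hW'
    obtain ⟨s, rfl⟩ := (hmem W').mp hW'
    exact fun x => quantize_mem_stdSimplex (hW s x)
  · exact fun x u => abs_sub_quantize_le (hW s x) (hl_pos u) u
  · exact fun x u => (le_one_add_div_mul_quantize (hW s x) (hl_pos u) u).trans <|
      mul_le_mul_of_nonneg_right (one_add_div_le_exp_two_mul_sq_div _ _)
        ((quantize_mem_stdSimplex (hW s x)).1 u)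
end

section
/- Let K_A, K_B be random variables on a finite key set 𝒦 with |𝒦| ≥ 2, defined jointly with random variables Z (on 𝒵) and a public message F (on ℱ). Suppose Pr(K_A ≠ K_B) ≤ δ and the security index satisfies log|𝒦| − H(K_A | Z, F) ≤ δ'. Let Y be any random variable such that K_B is a function of (Y, F). Then (1−δ)·log|𝒦| ≤ H(K_A | Z, F) − H(K_A | Y, F) + δ' + 1. -/
open Finset

lemma gibbs_cross {α : Type*} [Fintype α] (p q : α → ℝ)
    (hp0 : ∀ a, 0 ≤ p a) (hq0 : ∀ a, 0 ≤ q a)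
    (hpq : ∀ a, 0 < p a → 0 < q a)
    (hps : ∑ a, p a = 1) (hqs : ∑ a, q a ≤ 1) :
    - ∑ a, p a * Real.logb 2 (p a) ≤ - ∑ a, p a * Real.logb 2 (q a) := by
  have h2 : (0:ℝ) < Real.log 2 := Real.log_pos one_lt_two
  have key : ∀ a, p a * Real.logb 2 (q a) - p a * Real.logb 2 (p a)
      ≤ (q a - p a) / Real.log 2 := by
    intro a
    rcases eq_or_lt_of_le (hp0 a) with h | h
    · rw [← h]
      simp only [zero_mul, sub_zero, sub_self]
      exact div_nonneg (hq0 a) h2.le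
    · have hq := hpq a h
      have hd : Real.logb 2 (q a) - Real.logb 2 (p a) = Real.logb 2 (q a / p a) :=
        (Real.logb_div (ne_of_gt hq) (ne_of_gt h)).symm
      calc p a * Real.logb 2 (q a) - p a * Real.logb 2 (p a)
          = p a * (Real.log (q a / p a) / Real.log 2) := by
            rw [← mul_sub, hd, Real.logb]
        _ ≤ p a * ((q a / p a - 1) / Real.log 2) := by
            apply mul_le_mul_of_nonneg_left _ h.le
            exact (div_le_div_iff_of_pos_right h2).mpr
              (Real.log_le_sub_one_of_pos (div_pos hq h))
        _ = (q a - p a) / Real.log 2 := by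
            field_simp
  have hsum : ∑ a, (p a * Real.logb 2 (q a) - p a * Real.logb 2 (p a))
      ≤ ∑ a, (q a - p a) / Real.log 2 := Finset.sum_le_sum fun a _ => key a
  rw [Finset.sum_sub_distrib] at hsum
  have : ∑ a, (q a - p a) / Real.log 2 ≤ 0 := by
    rw [← Finset.sum_div, Finset.sum_sub_distrib, hps]
    apply div_nonpos_of_nonpos_of_nonneg _ h2.le
    linarith
  linarith

open scoped Classical in
/-- converse-type bound combining Fano's inequality and the
    security condition: (1-δ)·log|𝒦| ≤ H(K_A|Z,F) - H(K_A|Y,F) + δ' + 1. -/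
theorem converse_bound {K Y Z F : Type*} [Fintype K] [Fintype Y] [Fintype Z] [Fintype F]
    (p : K × Y × Z × F → ℝ) (hp : IsPMF p) (g : Y × F → K)
    (hK : 2 ≤ Fintype.card K) (δ δ' : ℝ)
    (herr : (∑ x : K × Y × Z × F,
        if x.1 ≠ g (x.2.1, x.2.2.2) then p x else 0) ≤ δ)
    (hsec : Real.logb 2 (Fintype.card K) -
        (ent (fun kzf : K × Z × F => ∑ y, p (kzf.1, y, kzf.2.1, kzf.2.2)) -
          ent (fun zf : Z × F => ∑ k, ∑ y, p (k, y, zf.1, zf.2))) ≤ δ') :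
    (1 - δ) * Real.logb 2 (Fintype.card K) ≤
      (ent (fun kzf : K × Z × F => ∑ y, p (kzf.1, y, kzf.2.1, kzf.2.2)) -
        ent (fun zf : Z × F => ∑ k, ∑ y, p (k, y, zf.1, zf.2))) -
      (ent (fun kyf : K × Y × F => ∑ z, p (kyf.1, kyf.2.1, z, kyf.2.2)) -
        ent (fun yf : Y × F => ∑ k, ∑ z, p (k, yf.1, z, yf.2))) + δ' + 1 := by
  obtain ⟨hp0, hp1⟩ := hp
  set N : ℝ := (Fintype.card K : ℝ) with hNdef
  have hN2 : (2:ℝ) ≤ N := by rw [hNdef]; exact_mod_cast hK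
  have hN1 : (1:ℝ) ≤ N - 1 := by linarith
  have hN1pos : (0:ℝ) < N - 1 := by linarith
  set L : ℝ := Real.logb 2 N with hLdef
  -- marginals
  set P3 : K × Y × F → ℝ := fun kyf => ∑ z, p (kyf.1, kyf.2.1, z, kyf.2.2) with hP3def
  set P2 : Y × F → ℝ := fun yf => ∑ k, ∑ z, p (k, yf.1, z, yf.2) with hP2def
  have hP3nn : ∀ a, 0 ≤ P3 a := fun a => Finset.sum_nonneg fun z _ => hp0 _
  have hP2eq : ∀ yf : Y × F, P2 yf = ∑ k, P3 (k, yf.1, yf.2) := fun yf => rfl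
  have hP2nn : ∀ yf, 0 ≤ P2 yf := fun yf => by
    rw [hP2eq]; exact Finset.sum_nonneg fun k _ => hP3nn _
  have hP3sum : ∑ a : K × Y × F, P3 a = 1 := by
    rw [← hp1]
    simp only [hP3def, Fintype.sum_prod_type]
    refine Finset.sum_congr rfl fun k _ => Finset.sum_congr rfl fun y _ => ?_
    exact Finset.sum_comm
  have hP2sum : ∑ yf : Y × F, P2 yf = 1 := by
    have hsw : ∑ a : K × Y × F, P3 a = ∑ yf : Y × F, ∑ k : K, P3 (k, yf) := by
      rw [Fintype.sum_prod_type]; exact Finset.sum_comm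
    rw [← hP3sum, hsw]
  have hP3leP2 : ∀ a : K × Y × F, P3 a ≤ P2 a.2 := by
    intro a
    rw [hP2eq]
    have := Finset.single_le_sum (f := fun k => P3 (k, a.2.1, a.2.2))
      (fun k _ => hP3nn _) (Finset.mem_univ a.1)
    simpa using this
  -- auxiliary distribution
  set w : K × Y × F → ℝ := fun a => if a.1 = g a.2 then (1:ℝ)/2 else 1/(2*(N-1)) with hwdef
  have hwpos : ∀ a, 0 < w a := by
    intro a; rw [hwdef]; dsimp only; split_ifs <;> positivity
  set q : K × Y × F → ℝ := fun a => w a * P2 a.2 with hqdef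
  have hwsum : ∀ c : Y × F, ∑ k : K, w (k, c.1, c.2) = 1 := by
    intro c
    have step : ∀ k : K, w (k, c.1, c.2)
        = (if k = g c then (1:ℝ)/2 - 1/(2*(N-1)) else 0) + 1/(2*(N-1)) := by
      intro k
      rw [hwdef]
      simp only
      split_ifs with h
      · ring
      · ring
    simp only [step, Finset.sum_add_distrib, Finset.sum_ite_eq', Finset.mem_univ,
      if_true, Finset.sum_const, Finset.card_univ, nsmul_eq_mul]
    have : (Fintype.card K : ℝ) = N := rfl
    rw [this]
    have hne : N - 1 ≠ 0 := ne_of_gt hN1pos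
    field_simp
    ring
  have hqsum : ∑ a : K × Y × F, q a = 1 := by
    rw [← hP2sum]
    rw [Fintype.sum_prod_type]
    rw [Finset.sum_comm]
    refine Finset.sum_congr rfl fun c _ => ?_
    have : ∑ k : K, q (k, c) = (∑ k : K, w (k, c.1, c.2)) * P2 c := by
      rw [Finset.sum_mul]
    rw [this, hwsum, one_mul]
  -- Gibbs
  have hgibbs : ent P3 ≤ - ∑ a, P3 a * Real.logb 2 (q a) := by
    rw [ent]
    refine gibbs_cross P3 q hP3nn (fun a => mul_nonneg (hwpos a).le (hP2nn _))
      (fun a ha => mul_pos (hwpos a) (lt_of_lt_of_le ha (hP3leP2 a))) hP3sum (le_of_eq hqsum)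
  -- split the cross entropy
  have hsplit : ∀ a, P3 a * Real.logb 2 (q a)
      = P3 a * Real.logb 2 (w a) + P3 a * Real.logb 2 (P2 a.2) := by
    intro a
    rcases eq_or_lt_of_le (hP3nn a) with h | h
    · rw [← h]; ring
    · have hP2pos : 0 < P2 a.2 := lt_of_lt_of_le h (hP3leP2 a)
      rw [hqdef]
      simp only
      rw [Real.logb_mul (ne_of_gt (hwpos a)) (ne_of_gt hP2pos)]
      ring
  -- the P2 part regroups to -ent P2
  have hpart2 : ∑ a : K × Y × F, P3 a * Real.logb 2 (P2 a.2)
      = ∑ yf : Y × F, P2 yf * Real.logb 2 (P2 yf) := by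
    rw [Fintype.sum_prod_type, Finset.sum_comm]
    refine Finset.sum_congr rfl fun c _ => ?_
    have hstep : ∀ x : K, P3 (x, c) * Real.logb 2 (P2 (x, c).2)
        = P3 (x, c) * Real.logb 2 (P2 c) := fun x => rfl
    simp only [hstep]
    rw [← Finset.sum_mul]
  -- error probability
  set Pe : ℝ := ∑ a : K × Y × F, (if a.1 ≠ g a.2 then P3 a else 0) with hPedef
  have hPenn : 0 ≤ Pe := Finset.sum_nonneg fun a _ => by
    split_ifs; exacts [hP3nn a, le_refl 0]
  have hPele : Pe ≤ δ := by
    refine le_trans (le_of_eq ?_) herr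
    rw [hPedef]
    simp only [hP3def, Fintype.sum_prod_type]
    refine Finset.sum_congr rfl fun k _ => Finset.sum_congr rfl fun y _ => ?_
    rw [Finset.sum_comm]
    refine Finset.sum_congr rfl fun f _ => ?_
    by_cases h : k = g (y, f) <;> simp [h]
  -- the w part
  have hlogb2 : Real.logb 2 (2:ℝ) = 1 := Real.logb_self_eq_one (by norm_num)
  have hwlog : ∀ a, - (P3 a * Real.logb 2 (w a))
      = P3 a + (if a.1 ≠ g a.2 then P3 a else 0) * Real.logb 2 (N-1) := by
    intro a
    rw [hwdef]
    dsimp only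
    by_cases h : a.1 = g a.2
    · rw [if_pos h, if_neg (not_not_intro h), one_div, Real.logb_inv, hlogb2]
      ring
    · rw [if_neg h, if_pos h, one_div, Real.logb_inv,
        Real.logb_mul two_ne_zero (ne_of_gt hN1pos), hlogb2]
      ring
  have hpart1 : - ∑ a : K × Y × F, P3 a * Real.logb 2 (w a)
      = 1 + Pe * Real.logb 2 (N-1) := by
    rw [← Finset.sum_neg_distrib]
    simp only [hwlog]
    rw [Finset.sum_add_distrib, hP3sum, ← Finset.sum_mul, ← hPedef]
  -- Fano
  have hlogN1nn : 0 ≤ Real.logb 2 (N-1) := Real.logb_nonneg one_lt_two hN1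
  have hlogle : Real.logb 2 (N-1) ≤ L := by
    rw [hLdef]
    exact Real.logb_le_logb_of_le one_lt_two hN1pos (by linarith)
  have hδnn : 0 ≤ δ := le_trans hPenn hPele
  have hPeL : Pe * Real.logb 2 (N-1) ≤ δ * L := by
    apply mul_le_mul hPele hlogle hlogN1nn hδnn
  have hfano : ent P3 - ent P2 ≤ 1 + δ * L := by
    have h1 : - ∑ a, P3 a * Real.logb 2 (q a)
        = (1 + Pe * Real.logb 2 (N-1)) + ent P2 := by
      have : ∑ a, P3 a * Real.logb 2 (q a)
          = ∑ a, P3 a * Real.logb 2 (w a) + ∑ yf, P2 yf * Real.logb 2 (P2 yf) := by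
        rw [← hpart2, ← Finset.sum_add_distrib]
        exact Finset.sum_congr rfl fun a _ => hsplit a
      rw [this, neg_add, hpart1, ent]
    have := hgibbs
    rw [h1] at this
    linarith
  -- conclude
  change (1-δ) * L ≤ _ - (ent P3 - ent P2) + δ' + 1
  have hexp : (1-δ) * L = L - δ * L := by ring
  rw [hexp]
  linarith [hfano, hsec]
end
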